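/- If λ ≠ 1, then the derivative of the quadratic functional q vanishes at H ∈ W if and only if H = K; that is, H = K is the unique critical point of q on the space W of tensors antisymmetric in their first two indices. -/

import Mathlib

open Finset

noncomputable section

/- Index set {0,1,2,3}. -/
abbrev Idx := Fin 4

/-- The Minkowski metric η_{ab} = diag(−1,1,1,1) (which equals its inverse η^{ab}). -/
def ηm (a b : Idx) : ℝ := if a = b then (if a = (0 : Idx) then -1 else 1) else 0

/- Rank-3 tensors H_{abc} (all indices lowered). -/
abbrev T3 := Idx → Idx → Idx → ℝ

/-- Raising all three indices: H^{abc} = η^{aa'} η^{bb'} η^{cc'} H_{a'b'c'}. -/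
def up3 (H : T3) (a b c : Idx) : ℝ :=
  ∑ a', ∑ b', ∑ c', ηm a a' * ηm b b' * ηm c c' * H a' b' c'

/-- Total antisymmetrization H_{[abc]} with weight 1/3!. -/
def asym (H : T3) (a b c : Idx) : ℝ :=
  (H a b c - H a c b + H b c a - H b a c + H c a b - H c b a) / 6

/-- The contraction H^a{}_{ca} (free index c): η^{aa'} H_{a'ca}. -/
def tr1 (H : T3) (c : Idx) : ℝ := ∑ a, ∑ a', ηm a a' * H a' c a

/-- The contraction H^{cb}{}_b (free index c): η^{cc'} η^{bb'} H_{c'b'b}. -/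
def tr2 (H : T3) (c : Idx) : ℝ := ∑ b, ∑ c', ∑ b', ηm c c' * ηm b b' * H c' b' b

/-- The quadratic functional
`q(H) = H^{abc}(H_{cba} − 2K_{cba}) + H^a{}_{ca}(H^{cb}{}_b − 2K^{cb}{}_b)
        + λ H^{[abc]}(H_{[abc]} − 2K_{[abc]})`. -/
def qfun (lam : ℝ) (K H : T3) : ℝ :=
  (∑ a, ∑ b, ∑ c, up3 H a b c * (H c b a - 2 * K c b a))
  + (∑ c, tr1 H c * (tr2 H c - 2 * tr2 K c))
  + lam * ∑ a, ∑ b, ∑ c,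
      up3 (fun x y z => asym H x y z) a b c * (asym H a b c - 2 * asym K a b c)

/-- `W`: the space of rank-3 tensors antisymmetric in their first two indices. -/
def Wsub : Submodule ℝ T3 where
  carrier := {H | ∀ a b c, H a b c = -H b a c}
  add_mem' := by
    intro x y hx hy a b c
    simp only [Pi.add_apply]
    rw [hx a b c, hy a b c]; ring
  zero_mem' := by intro a b c; simp
  smul_mem' := by
    intro r x hx a b c
    simp only [Pi.smul_apply, smul_eq_mul]
    rw [hx a b c]; ring

/-!
With `B(X, Y) := X^{abc} Y_{cba} + X^a{}_{ca} Y^{cb}{}_b + λ X^{[abc]} Y_{[abc]}` one has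
`q(H) = B(H, H) − 2 B(H, K)`, and `B` is symmetric on `W`, so `dq_H = 2 B(·, H − K)`.
It remains to see that `B` is nondegenerate on `W` when `λ ≠ 1`. Writing `t(X)_c := X^a{}_{ca}`,
on `W` the form is `½⟨X, Y⟩ + (λ − 3/2)⟨X_{[abc]}, Y_{[abc]}⟩ − ⟨t(X), t(Y)⟩` for the Minkowski
pairing `⟨·,·⟩`; pairing `X` against suitable raised tensors built from `X`, `X_{[abc]}` and
`t(X)` turns this indefinite expression into `(λ − 1)(½ Σ X_{abc}² + Σ t(X)_c²)`.
-/

section CriticalPoint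

variable {𝕜 E : Type*} [NontriviallyNormedField 𝕜] [NormedAddCommGroup E] [NormedSpace 𝕜 E]

theorem hasFDerivAt_apply_self_sub_two_mul (B : E →L[𝕜] E →L[𝕜] 𝕜) (hB : ∀ x y, B x y = B y x)
    (k h : E) :
    HasFDerivAt (fun x => B x x - 2 * B x k) (B.flip ((2 : 𝕜) • (h - k))) h := by
  refine ((B.hasFDerivAt.clm_apply (hasFDerivAt_id h)).sub
    ((B.flip k).hasFDerivAt.const_mul 2)).congr_fderiv ?_
  ext v
  simp only [ContinuousLinearMap.comp_id, id_eq, sub_apply, add_apply, hB h v,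
    ContinuousLinearMap.flip_apply, smul_apply, smul_eq_mul, map_smul, map_sub]
  ring

theorem fderiv_apply_self_sub_two_mul_eq_zero_iff [CharZero 𝕜] (B : E →L[𝕜] E →L[𝕜] 𝕜)
    (hB : ∀ x y, B x y = B y x) (hB' : Function.Injective B.flip) (k h : E) :
    fderiv 𝕜 (fun x => B x x - 2 * B x k) h = 0 ↔ h = k := by
  rw [(hasFDerivAt_apply_self_sub_two_mul B hB k h).fderiv, ← map_zero B.flip, hB'.eq_iff,
    smul_eq_zero, sub_eq_zero]
  simp

end CriticalPoint

lemma sum_ηm_mul (a : Idx) (f : Idx → ℝ) : ∑ a', ηm a a' * f a' = ηm a a * f a := by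
  rw [Finset.sum_eq_single a (fun b _ hb => by simp [ηm, Ne.symm hb]) (by simp)]

lemma up3_apply (H : T3) (a b c : Idx) :
    up3 H a b c = ηm a a * ηm b b * ηm c c * H a b c := by
  simp only [up3, mul_assoc, ← Finset.mul_sum, sum_ηm_mul]

lemma tr1_apply (H : T3) (c : Idx) : tr1 H c = ∑ a, ηm a a * H a c a := by
  simp only [tr1, sum_ηm_mul]

lemma tr2_apply (H : T3) (c : Idx) : tr2 H c = ηm c c * ∑ b, ηm b b * H c b b := by
  simp only [tr2, Finset.mul_sum]
  refine Finset.sum_congr rfl fun b _ => ?_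
  simp only [mul_assoc, ← Finset.mul_sum, sum_ηm_mul]

lemma up3_add (X Y : T3) : up3 (X + Y) = up3 X + up3 Y := by
  funext a b c
  simp only [up3_apply, Pi.add_apply]
  ring

lemma up3_smul (r : ℝ) (X : T3) : up3 (r • X) = r • up3 X := by
  funext a b c
  simp only [up3_apply, Pi.smul_apply, smul_eq_mul]
  ring

lemma asym_add (X Y : T3) : asym (X + Y) = asym X + asym Y := by
  funext a b c
  simp only [asym, Pi.add_apply]
  ring

lemma asym_smul (r : ℝ) (X : T3) : asym (r • X) = r • asym X := by
  funext a b c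
  simp only [asym, Pi.smul_apply, smul_eq_mul]
  ring

lemma tr1_add (X Y : T3) : tr1 (X + Y) = tr1 X + tr1 Y := by
  funext c
  simp only [tr1_apply, Pi.add_apply, mul_add, Finset.sum_add_distrib]

lemma tr1_smul (r : ℝ) (X : T3) : tr1 (r • X) = r • tr1 X := by
  funext c
  simp only [tr1_apply, Pi.smul_apply, smul_eq_mul, Finset.mul_sum, mul_left_comm r]

lemma tr2_add (X Y : T3) : tr2 (X + Y) = tr2 X + tr2 Y := by
  funext c
  simp only [tr2_apply, Pi.add_apply, mul_add, Finset.sum_add_distrib]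

lemma tr2_smul (r : ℝ) (X : T3) : tr2 (r • X) = r • tr2 X := by
  funext c
  simp only [tr2_apply, Pi.smul_apply, smul_eq_mul, Finset.mul_sum, mul_left_comm r]

/-- Rewriting with this lets `ring` use the antisymmetry of `X`. -/
lemma eq_half_sub_swap {X : T3} (hX : X ∈ Wsub) : X = fun a b c => (X a b c - X b a c) / 2 := by
  funext a b c
  rw [hX a b c]
  ring

lemma up3_mem {X : T3} (hX : X ∈ Wsub) : up3 X ∈ Wsub := by
  intro a b c
  rw [up3_apply, up3_apply, hX a b c]
  ring

lemma asym_mem (X : T3) : asym X ∈ Wsub := by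
  intro a b c
  simp only [asym]
  ring

def traceTensor (v : Idx → ℝ) : T3 := fun a b c => ηm a c * v b - ηm b c * v a

lemma traceTensor_mem (v : Idx → ℝ) : traceTensor v ∈ Wsub := by
  intro a b c
  simp only [traceTensor]
  ring

lemma eq_zero_of_sum_sq_eq_zero {X : T3} (h : ∑ a, ∑ b, ∑ c, X a b c ^ 2 = 0) : X = 0 := by
  funext a b c
  rw [Finset.sum_eq_zero_iff_of_nonneg fun _ _ => by positivity] at h
  have h := h a (Finset.mem_univ a)
  rw [Finset.sum_eq_zero_iff_of_nonneg fun _ _ => by positivity] at h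
  have h := h b (Finset.mem_univ b)
  rw [Finset.sum_eq_zero_iff_of_nonneg fun _ _ => by positivity] at h
  exact pow_eq_zero_iff two_ne_zero |>.mp (h c (Finset.mem_univ c))

def bform (lam : ℝ) (X Y : T3) : ℝ :=
  (∑ a, ∑ b, ∑ c, up3 X a b c * Y c b a) + (∑ c, tr1 X c * tr2 Y c)
    + lam * ∑ a, ∑ b, ∑ c, up3 (asym X) a b c * asym Y a b c

lemma qfun_eq_bform (lam : ℝ) (K H : T3) :
    qfun lam K H = bform lam H H - 2 * bform lam H K := by
  simp only [qfun, bform, mul_sub, Finset.sum_sub_distrib, mul_left_comm _ (2 : ℝ),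
    ← Finset.mul_sum]
  ring

lemma isBilinearMap_bform (lam : ℝ) : IsBilinearMap ℝ (bform lam) := by
  constructor <;> intros <;>
    simp only [bform, up3_add, up3_smul, asym_add, asym_smul, tr1_add, tr1_smul, tr2_add,
      tr2_smul, Pi.add_apply, Pi.smul_apply, smul_eq_mul, add_mul, mul_add,
      Finset.sum_add_distrib, Finset.mul_sum, mul_assoc, mul_left_comm _ (_ : ℝ)] <;>
    ring

set_option maxRecDepth 10000 in
lemma bform_comm (lam : ℝ) {X Y : T3} (hX : X ∈ Wsub) (hY : Y ∈ Wsub) :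
    bform lam X Y = bform lam Y X := by
  rw [eq_half_sub_swap hX, eq_half_sub_swap hY]
  simp only [bform, up3_apply, tr1_apply, tr2_apply, asym, Fin.sum_univ_four]
  ring

set_option maxRecDepth 10000 in
lemma bform_up3_self (lam : ℝ) {X : T3} (hX : X ∈ Wsub) :
    bform lam (up3 X) X = (∑ a, ∑ b, ∑ c, X a b c ^ 2) / 2
      + (lam - 3 / 2) * (∑ a, ∑ b, ∑ c, asym X a b c ^ 2) - ∑ c, tr1 X c ^ 2 := by
  rw [eq_half_sub_swap hX]
  simp only [bform, up3_apply, tr1_apply, tr2_apply, asym, Fin.sum_univ_four, ηm,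
    Fin.isValue, Fin.reduceEq, if_true, if_false]
  ring

set_option maxRecDepth 10000 in
lemma bform_up3_asym (lam : ℝ) {X : T3} (hX : X ∈ Wsub) :
    bform lam (up3 (asym X)) X = (lam - 1) * ∑ a, ∑ b, ∑ c, asym X a b c ^ 2 := by
  rw [eq_half_sub_swap hX]
  simp only [bform, up3_apply, tr1_apply, tr2_apply, asym, Fin.sum_univ_four, ηm,
    Fin.isValue, Fin.reduceEq, if_true, if_false]
  ring

set_option maxRecDepth 10000 in
lemma bform_up3_traceTensor (lam : ℝ) (v : Idx → ℝ) {X : T3} (hX : X ∈ Wsub) :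
    bform lam (up3 (traceTensor v)) X = -2 * ∑ c, v c * tr1 X c := by
  rw [eq_half_sub_swap hX]
  simp only [bform, up3_apply, tr1_apply, tr2_apply, asym, traceTensor, Fin.sum_univ_four, ηm,
    Fin.isValue, Fin.reduceEq, if_true, if_false]
  ring

/-- The coefficients cancel the `X_{[abc]}` term of `bform_up3_self` and flip the sign of its
trace term. -/
def bformWitness (lam : ℝ) (X : T3) : T3 :=
  (lam - 1) • up3 X + (3 / 2 - lam) • up3 (asym X) - (lam - 1) • up3 (traceTensor (tr1 X))

lemma bformWitness_mem (lam : ℝ) {X : T3} (hX : X ∈ Wsub) : bformWitness lam X ∈ Wsub :=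
  Wsub.sub_mem
    (Wsub.add_mem (Wsub.smul_mem _ (up3_mem hX)) (Wsub.smul_mem _ (up3_mem (asym_mem X))))
    (Wsub.smul_mem _ (up3_mem (traceTensor_mem _)))

lemma bform_bformWitness (lam : ℝ) {X : T3} (hX : X ∈ Wsub) :
    bform lam (bformWitness lam X) X
      = (lam - 1) * ((∑ a, ∑ b, ∑ c, X a b c ^ 2) / 2 + ∑ c, tr1 X c ^ 2) := by
  have hB := isBilinearMap_bform lam
  simp only [bformWitness, sub_eq_add_neg, ← neg_smul, hB.add_left, hB.smul_left, smul_eq_mul,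
    bform_up3_self lam hX, bform_up3_asym lam hX, bform_up3_traceTensor lam _ hX, ← sq]
  ring

lemma eq_zero_of_forall_bform_eq_zero {lam : ℝ} (hlam : lam ≠ 1) {X : T3} (hX : X ∈ Wsub)
    (h : ∀ Y ∈ Wsub, bform lam Y X = 0) : X = 0 := by
  have hwit := h _ (bformWitness_mem lam hX)
  rw [bform_bformWitness lam hX, mul_eq_zero, or_iff_right (sub_ne_zero.mpr hlam)] at hwit
  refine eq_zero_of_sum_sq_eq_zero (le_antisymm ?_ (by positivity))
  have : 0 ≤ ∑ c, tr1 X c ^ 2 := by positivity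
  linarith

def bformW (lam : ℝ) : Wsub →L[ℝ] Wsub →L[ℝ] ℝ :=
  ((isBilinearMap_bform lam).toLinearMap.compl₁₂ Wsub.subtype Wsub.subtype).toContinuousBilinearMap

lemma bformW_apply (lam : ℝ) (X Y : Wsub) : bformW lam X Y = bform lam X Y := rfl

lemma bformW_flip_injective {lam : ℝ} (hlam : lam ≠ 1) : Function.Injective (bformW lam).flip := by
  refine (injective_iff_map_eq_zero _).mpr fun X hX => Subtype.ext ?_
  refine eq_zero_of_forall_bform_eq_zero hlam X.2 fun Y hY => ?_
  simpa [bformW_apply] using DFunLike.congr_fun hX ⟨Y, hY⟩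

/-- For λ ≠ 1, the (Fréchet) derivative of the quadratic functional `q`
on the space `W` of tensors antisymmetric in their first two indices vanishes at `H` iff
`H = K`; i.e. `H = K` is the unique critical point of `q` on `W`. -/
theorem statement14 (lam : ℝ) (hlam : lam ≠ 1) (K : Wsub) :
    ∀ H : Wsub, fderiv ℝ (fun H : Wsub => qfun lam (K : T3) (H : T3)) H = 0 ↔ H = K := by
  intro H
  have hq : (fun H : Wsub => qfun lam (K : T3) (H : T3))
      = fun H => bformW lam H H - 2 * bformW lam H K :=
    funext fun H => qfun_eq_bform lam K H
  rw [hq]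
  exact fderiv_apply_self_sub_two_mul_eq_zero_iff (bformW lam)
    (fun X Y => bform_comm lam X.2 Y.2) (bformW_flip_injective hlam) K H
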